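/- arXiv:2503.05542 — 8 statements merged into one kernel-verified Lean document; each statement's English description precedes it below -/
import Mathlib

section
/- Let p ∈ ℕ, λ > 0, Σ̂ a p×p real symmetric positive semidefinite matrix, Σ̂_λ := Σ̂ + λ·I_p, β_λ, γ ∈ ℝ^p, σ > 0, n ∈ ℕ with n ≥ 1. Let ε_λ be an ℝ^p-valued random vector with E[ε_λ] = 0 and second-moment matrix E[ε_λ ε_λ^⊤] = (σ²/n)·Σ̂_λ^{-1} Σ̂. Set y_λ := Σ̂_λ^{1/2} β_λ + ε_λ, let R : ℝ → ℝ be a (deterministic) continuous function and β̂ := Σ̂_λ^{-1/2}(I_p − R(Σ̂_λ)) y_λ. Then E[‖Σ̂_λ^{1/2}(β̂ − γ)‖²] = ‖Σ̂_λ^{1/2}(R(Σ̂_λ)β_λ + (γ − β_λ))‖² + (σ²/n)·trace((I_p − R(Σ̂_λ))² Σ̂_λ^{-1} Σ̂). -/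
/-! With `S := Σ̂_λ^{1/2}` and `F := R(Σ̂_λ)`, which commute, the prediction residual is
`S(β̂ - γ) = b + (1 - F) ε_λ` with the deterministic bias `b = -S(Fβ_λ + γ - β_λ)`.
Since `ε_λ` is centred, the cross term has mean zero, so the risk is `‖b‖²` plus the trace of the
second-moment matrix of `(1 - F) ε_λ`, namely `(1 - F) E[ε_λ ε_λᵀ] (1 - F)`; cyclicity of the
trace and the symmetry of `F` give the variance term. -/

open Matrix MeasureTheory

/-- Squared Euclidean norm on `Fin p → ℝ`. -/
noncomputable def sqnorm {p : ℕ} (v : Fin p → ℝ) : ℝ := ∑ i, (v i) ^ 2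

noncomputable def secondMoment {Ω ι : Type*} [MeasurableSpace Ω] (μ : Measure Ω)
    (ε : Ω → ι → ℝ) : Matrix ι ι ℝ :=
  Matrix.of fun i j => ∫ ω, ε ω i * ε ω j ∂μ

lemma sqnorm_neg {p : ℕ} (v : Fin p → ℝ) : sqnorm (-v) = sqnorm v := by
  simp [sqnorm]

section RandomVector

variable {Ω ι m : Type*} [MeasurableSpace Ω] {μ : Measure Ω} [Fintype ι] {ε : Ω → ι → ℝ}

lemma memLp_mulVec_apply (hε : ∀ j, MemLp (fun ω => ε ω j) 2 μ) (M : Matrix m ι ℝ) (i : m) :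
    MemLp (fun ω => (M *ᵥ ε ω) i) 2 μ := by
  simp only [mulVec, dotProduct]
  exact memLp_finsetSum _ fun j _ => (hε j).const_mul (M i j)

lemma integral_mulVec_apply (hε : ∀ j, Integrable (fun ω => ε ω j) μ) (M : Matrix m ι ℝ)
    (i : m) : ∫ ω, (M *ᵥ ε ω) i ∂μ = (M *ᵥ fun j => ∫ ω, ε ω j ∂μ) i := by
  simp only [mulVec, dotProduct]
  rw [integral_finsetSum _ fun j _ => (hε j).const_mul (M i j)]
  simp only [integral_const_mul]

lemma integral_mulVec_apply_mul_mulVec_apply (hε : ∀ j, MemLp (fun ω => ε ω j) 2 μ)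
    (M N : Matrix m ι ℝ) (i k : m) :
    ∫ ω, (M *ᵥ ε ω) i * (N *ᵥ ε ω) k ∂μ = (M * secondMoment μ ε * Nᵀ) i k := by
  have hprod : ∀ j l, Integrable (fun ω => ε ω j * ε ω l) μ := fun j l =>
    (hε j).integrable_mul (hε l)
  calc ∫ ω, (M *ᵥ ε ω) i * (N *ᵥ ε ω) k ∂μ
        = ∫ ω, ∑ j, ∑ l, M i j * N k l * (ε ω j * ε ω l) ∂μ := by
        congr 1; funext ω
        simp only [mulVec, dotProduct, Finset.sum_mul_sum]
        exact Finset.sum_congr rfl fun j _ => Finset.sum_congr rfl fun l _ => by ring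
    _ = ∑ j, ∑ l, M i j * N k l * ∫ ω, ε ω j * ε ω l ∂μ := by
        rw [integral_finsetSum _ fun j _ => integrable_finsetSum _ fun l _ => (hprod j l).const_mul _]
        refine Finset.sum_congr rfl fun j _ => ?_
        rw [integral_finsetSum _ fun l _ => (hprod j l).const_mul _]
        simp only [integral_const_mul]
    _ = (M * secondMoment μ ε * Nᵀ) i k := by
        simp only [mul_apply, transpose_apply, secondMoment, of_apply, Finset.sum_mul]
        rw [Finset.sum_comm]
        exact Finset.sum_congr rfl fun j _ => Finset.sum_congr rfl fun l _ => by ring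

lemma integral_const_add_sq [IsProbabilityMeasure μ] {X : Ω → ℝ} (hX : MemLp X 2 μ)
    (hmean : ∫ ω, X ω ∂μ = 0) (c : ℝ) :
    ∫ ω, (c + X ω) ^ 2 ∂μ = c ^ 2 + ∫ ω, X ω ^ 2 ∂μ := by
  have hlin : Integrable (fun ω => c ^ 2 + 2 * c * X ω) μ :=
    (integrable_const _).add ((hX.integrable one_le_two).const_mul _)
  calc ∫ ω, (c + X ω) ^ 2 ∂μ = ∫ ω, (c ^ 2 + 2 * c * X ω) + X ω ^ 2 ∂μ := by
        congr 1; funext ω; ring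
    _ = c ^ 2 + ∫ ω, X ω ^ 2 ∂μ := by
        rw [integral_add hlin hX.integrable_sq,
          integral_add (integrable_const _) ((hX.integrable one_le_two).const_mul _),
          integral_const_mul, hmean]
        simp

lemma integral_sqnorm_add_mulVec [IsProbabilityMeasure μ] {p : ℕ}
    (hε : ∀ j, MemLp (fun ω => ε ω j) 2 μ) (hmean : ∀ j, ∫ ω, ε ω j ∂μ = 0)
    (b : Fin p → ℝ) (M : Matrix (Fin p) ι ℝ) :
    ∫ ω, sqnorm (b + M *ᵥ ε ω) ∂μ = sqnorm b + (M * secondMoment μ ε * Mᵀ).trace := by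
  have hcentred : ∀ i, ∫ ω, (M *ᵥ ε ω) i ∂μ = 0 := fun i => by
    rw [integral_mulVec_apply (fun j => (hε j).integrable one_le_two)]
    simp only [hmean]
    exact congrFun (mulVec_zero M) i
  have hcomponent : ∀ i, ∫ ω, (b i + (M *ᵥ ε ω) i) ^ 2 ∂μ
      = b i ^ 2 + (M * secondMoment μ ε * Mᵀ) i i := fun i => by
    rw [integral_const_add_sq (memLp_mulVec_apply hε M i) (hcentred i),
      ← integral_mulVec_apply_mul_mulVec_apply hε]
    simp only [sq]
  simp only [sqnorm, Pi.add_apply]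
  rw [integral_finsetSum]
  · simp only [hcomponent, Finset.sum_add_distrib, trace, diag_apply]
  · exact fun i _ => ((memLp_const (b i)).add (memLp_mulVec_apply hε M i)).integrable_sq

end RandomVector

section HermitianCfc

variable {n : Type*} [Fintype n] [DecidableEq n]

lemma Matrix.IsHermitian.commute_cfc {𝕜 : Type*} [RCLike 𝕜] {A : Matrix n n 𝕜}
    (hA : A.IsHermitian) (f g : ℝ → ℝ) :
    Commute (hA.cfc f) (hA.cfc g) := by
  simpa only [hA.cfc_eq] using cfc_commute_cfc f g A

lemma Matrix.IsHermitian.transpose_cfc {A : Matrix n n ℝ} (hA : A.IsHermitian) (f : ℝ → ℝ) :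
    (hA.cfc f)ᵀ = hA.cfc f := by
  rw [← conjTranspose_eq_transpose_of_trivial, ← hA.cfc_eq]
  exact IsSelfAdjoint.cfc

lemma Matrix.PosDef.isUnit_cfc_sqrt {A : Matrix n n ℝ} (hA : A.PosDef) :
    IsUnit (hA.isHermitian.cfc Real.sqrt) := by
  rw [← hA.isHermitian.cfc_eq, isUnit_cfc_iff _ _ (ha := hA.isHermitian.isSelfAdjoint),
    hA.isHermitian.spectrum_real_eq_range_eigenvalues]
  rintro _ ⟨i, rfl⟩
  exact (Real.sqrt_pos.2 (hA.eigenvalues_pos i)).ne'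

end HermitianCfc

lemma mulVec_filter_estimate_sub {n R : Type*} [Fintype n] [DecidableEq n] [CommRing R]
    {S F : Matrix n n R}
    (hS : IsUnit S) (hSF : Commute S F) (β γ e : n → R) :
    S *ᵥ (S⁻¹ *ᵥ ((1 - F) *ᵥ (S *ᵥ β + e)) - γ)
      = -(S *ᵥ (F *ᵥ β + (γ - β))) + (1 - F) *ᵥ e := by
  have hFS : F *ᵥ (S *ᵥ β) = S *ᵥ (F *ᵥ β) := by
    rw [mulVec_mulVec, mulVec_mulVec, hSF.eq]
  rw [mulVec_sub, mulVec_mulVec, mul_nonsing_inv S ((isUnit_iff_isUnit_det S).1 hS), one_mulVec,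
    mulVec_add, sub_mulVec, one_mulVec, hFS, mulVec_add, mulVec_sub]
  abel

theorem prediction_risk_decomposition_general
    (p : ℕ) (lam : ℝ) (hlam : 0 < lam)
    (Sig : Matrix (Fin p) (Fin p) ℝ) (hSig : Sig.PosSemidef)
    (Sigl : Matrix (Fin p) (Fin p) ℝ) (hSigl_def : Sigl = Sig + lam • 1)
    (hSigl : Sigl.PosSemidef)
    (betal gam : Fin p → ℝ) (sigma : ℝ)
    (n : ℕ)
    (Ω : Type*) [MeasurableSpace Ω] (μ : Measure Ω) [IsProbabilityMeasure μ]
    (epsl : Ω → Fin p → ℝ)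
    (hL2 : ∀ i, MemLp (fun ω => epsl ω i) 2 μ)
    (hmean : ∀ i, ∫ ω, epsl ω i ∂μ = 0)
    (hcov : ∀ i j, ∫ ω, epsl ω i * epsl ω j ∂μ = sigma ^ 2 / n * ((Sigl⁻¹ * Sig) i j))
    (R : ℝ → ℝ)
    (yl : Ω → Fin p → ℝ) (hyl : ∀ ω, yl ω = hSigl.isHermitian.cfc Real.sqrt *ᵥ betal + epsl ω)
    (betahat : Ω → Fin p → ℝ)
    (hbetahat : ∀ ω, betahat ω = (hSigl.isHermitian.cfc Real.sqrt)⁻¹ *ᵥ ((1 - hSigl.isHermitian.cfc R) *ᵥ yl ω)) :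
    ∫ ω, sqnorm (hSigl.isHermitian.cfc Real.sqrt *ᵥ (betahat ω - gam)) ∂μ =
      sqnorm (hSigl.isHermitian.cfc Real.sqrt *ᵥ (hSigl.isHermitian.cfc R *ᵥ betal + (gam - betal)))
        + sigma ^ 2 / n * ((1 - hSigl.isHermitian.cfc R) ^ 2 * Sigl⁻¹ * Sig).trace := by
  set S := hSigl.isHermitian.cfc Real.sqrt
  set F := hSigl.isHermitian.cfc R
  have hSigl_pd : Sigl.PosDef := hSigl_def ▸ PosDef.posSemidef_add hSig (PosDef.one.smul hlam)
  have hresidual : ∀ ω, S *ᵥ (betahat ω - gam)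
      = -(S *ᵥ (F *ᵥ betal + (gam - betal))) + (1 - F) *ᵥ epsl ω := fun ω => by
    rw [hbetahat, hyl]
    exact mulVec_filter_estimate_sub hSigl_pd.isUnit_cfc_sqrt
      (hSigl.isHermitian.commute_cfc _ _) _ _ _
  have hmoment : secondMoment μ epsl = (sigma ^ 2 / n) • (Sigl⁻¹ * Sig) := by
    ext i j
    simp [secondMoment, hcov]
  have hsymm : (1 - F)ᵀ = 1 - F := by
    rw [transpose_sub, transpose_one, hSigl.isHermitian.transpose_cfc]
  simp only [hresidual]
  rw [integral_sqnorm_add_mulVec hL2 hmean, sqnorm_neg, hmoment, hsymm, trace_mul_cycle,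
    mul_smul_comm, trace_smul, smul_eq_mul, sq (1 - F)]
  simp only [Matrix.mul_assoc]

/-- prediction risk of a linear filter estimator: for a deterministic filter `R`
and noise `ε_λ` with mean zero and second-moment matrix `(σ²/n)·Σ̂_λ⁻¹ Σ̂`, the expected penalised
prediction loss equals the approximation error plus the variance trace term. -/
theorem prediction_risk_decomposition
    (p : ℕ) (lam : ℝ) (hlam : 0 < lam)
    (Sig : Matrix (Fin p) (Fin p) ℝ) (hSig : Sig.PosSemidef)
    (Sigl : Matrix (Fin p) (Fin p) ℝ) (hSigl_def : Sigl = Sig + lam • 1)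
    (hSigl : Sigl.PosSemidef)
    (betal gam : Fin p → ℝ) (sigma : ℝ) (hsigma : 0 < sigma)
    (n : ℕ) (hn : 1 ≤ n)
    (Ω : Type*) [MeasurableSpace Ω] (μ : Measure Ω) [IsProbabilityMeasure μ]
    (epsl : Ω → Fin p → ℝ)
    (hL2 : ∀ i, MemLp (fun ω => epsl ω i) 2 μ)
    (hmean : ∀ i, ∫ ω, epsl ω i ∂μ = 0)
    (hcov : ∀ i j, ∫ ω, epsl ω i * epsl ω j ∂μ = sigma ^ 2 / n * ((Sigl⁻¹ * Sig) i j))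
    (R : ℝ → ℝ) (hR : Continuous R)
    (yl : Ω → Fin p → ℝ) (hyl : ∀ ω, yl ω = hSigl.isHermitian.cfc Real.sqrt *ᵥ betal + epsl ω)
    (betahat : Ω → Fin p → ℝ)
    (hbetahat : ∀ ω, betahat ω = (hSigl.isHermitian.cfc Real.sqrt)⁻¹ *ᵥ ((1 - hSigl.isHermitian.cfc R) *ᵥ yl ω)) :
    ∫ ω, sqnorm (hSigl.isHermitian.cfc Real.sqrt *ᵥ (betahat ω - gam)) ∂μ =
      sqnorm (hSigl.isHermitian.cfc Real.sqrt *ᵥ (hSigl.isHermitian.cfc R *ᵥ betal + (gam - betal)))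
        + sigma ^ 2 / n * ((1 - hSigl.isHermitian.cfc R) ^ 2 * Sigl⁻¹ * Sig).trace :=
  prediction_risk_decomposition_general p lam hlam Sig hSig Sigl hSigl_def hSigl betal gam sigma n Ω
    μ epsl hL2 hmean hcov R yl hyl betahat hbetahat
end

section
/- Let p ∈ ℕ, S a p×p real symmetric positive semidefinite matrix, t ≥ 0 and v ∈ ℝ^p. Then ‖(I_p − exp(−t·S))v‖ ≤ 1.2985·‖(I_p − (I_p + t·S)^{-1})v‖. (Comparison of the gradient-flow and ridge-regression stochastic error terms.) -/
open Matrix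

/-- Euclidean norm on `Fin p → ℝ`. -/
noncomputable def enorm' {p : ℕ} (v : Fin p → ℝ) : ℝ := Real.sqrt (sqnorm v)

/-!
Both matrices are functions of `S`: `1 - exp (-tS) = F(S)` and `1 - (1 + tS)⁻¹ = G(S)` with
`F λ = 1 - exp (-tλ)` and `G λ = 1 - (1 + tλ)⁻¹`. If `|F| ≤ c |G|` on the spectrum, then
`c² G(S)² - F(S)²` is positive semidefinite, which is the claim after pairing with `v`. With
`x = tλ ≥ 0`, `F ≤ 1.2985 G` reads `1 - 0.2985 x ≤ (1 + x) exp (-x)`. The function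
`ψ x = (1 + x) exp (-x)` has `ψ'' x = (x - 1) exp (-x)`: on `[0, 1]` it is concave and lies above
its chord, on `[1, ∞)` it is convex and lies above its tangents at `1.78` and `1.81`.
-/

lemma ConvexOn.add_mul_sub_le_of_hasDerivAt {S : Set ℝ} {f : ℝ → ℝ} {x y f' : ℝ}
    (hf : ConvexOn ℝ S f) (hx : x ∈ S) (hy : y ∈ S) (hf' : HasDerivAt f f' x) :
    f x + f' * (y - x) ≤ f y := by
  rcases lt_trichotomy x y with hxy | rfl | hxy
  · have := hf.le_slope_of_hasDerivAt hx hy hxy hf'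
    rw [slope_def_field, le_div_iff₀ (sub_pos.2 hxy)] at this
    linarith
  · simp
  · have := hf.slope_le_of_hasDerivAt hy hx hxy hf'
    rw [slope_def_field, div_le_iff₀ (sub_pos.2 hxy)] at this
    linarith

namespace Real

lemma sum_sub_le_exp_of_abs_le_one {x : ℝ} (hx : |x| ≤ 1) {n : ℕ} (hn : 0 < n) :
    ∑ m ∈ Finset.range n, x ^ m / m.factorial - |x| ^ n * (n.succ / (n.factorial * n)) ≤
      exp x := by
  linarith [(abs_sub_le_iff.1 (exp_bound hx hn)).2]

lemma sq_le_exp_of_le_exp_half {x L : ℝ} (hL : 0 ≤ L) (h : L ≤ exp (x / 2)) : L ^ 2 ≤ exp x :=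
  calc L ^ 2 ≤ exp (x / 2) ^ 2 := by gcongr
    _ = exp x := by rw [← exp_nat_mul]; ring_nf

lemma exp_neg_1_78_ge : (0.16863 : ℝ) ≤ exp (-1.78) := by
  have h := sum_sub_le_exp_of_abs_le_one (x := -0.89) (by norm_num [abs_le]) (n := 10)
    (by norm_num)
  norm_num [Finset.sum_range_succ, Nat.factorial] at h
  calc (0.16863 : ℝ) ≤ 0.41065 ^ 2 := by norm_num
    _ ≤ exp (-1.78) := sq_le_exp_of_le_exp_half (by norm_num) (by norm_num; linarith)

lemma exp_neg_1_81_ge : (0.16365 : ℝ) ≤ exp (-1.81) := by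
  have h := sum_sub_le_exp_of_abs_le_one (x := -0.905) (by norm_num [abs_le]) (n := 10)
    (by norm_num)
  norm_num [Finset.sum_range_succ, Nat.factorial] at h
  calc (0.16365 : ℝ) ≤ 0.40454 ^ 2 := by norm_num
    _ ≤ exp (-1.81) := sq_le_exp_of_le_exp_half (by norm_num) (by norm_num; linarith)

lemma hasDerivAt_one_add_mul_exp_neg (x : ℝ) :
    HasDerivAt (fun x => (1 + x) * exp (-x)) (-(x * exp (-x))) x := by
  have : HasDerivAt (fun x => (1 + x) * exp (-x)) (1 * exp (-x) + (1 + x) * (exp (-x) * -1)) x :=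
    ((hasDerivAt_id' x).const_add 1).mul (hasDerivAt_neg' x).exp
  convert this using 1
  ring

lemma hasDerivAt_neg_mul_exp_neg (x : ℝ) :
    HasDerivAt (fun x => -(x * exp (-x))) ((x - 1) * exp (-x)) x := by
  have : HasDerivAt (fun x => -(x * exp (-x))) (-(1 * exp (-x) + x * (exp (-x) * -1))) x :=
    ((hasDerivAt_id' x).mul (hasDerivAt_neg' x).exp).neg
  convert this using 1
  ring

lemma concaveOn_one_add_mul_exp_neg :
    ConcaveOn ℝ (Set.Iic 1) (fun x => (1 + x) * exp (-x)) := by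
  refine concaveOn_of_hasDerivWithinAt2_nonpos (convex_Iic 1) (by fun_prop)
    (fun x _ => (hasDerivAt_one_add_mul_exp_neg x).hasDerivWithinAt)
    (fun x _ => (hasDerivAt_neg_mul_exp_neg x).hasDerivWithinAt) fun x hx => ?_
  rw [interior_Iic] at hx
  exact mul_nonpos_of_nonpos_of_nonneg (by linarith [hx.out]) (exp_pos _).le

lemma convexOn_one_add_mul_exp_neg :
    ConvexOn ℝ (Set.Ici 1) (fun x => (1 + x) * exp (-x)) := by
  refine convexOn_of_hasDerivWithinAt2_nonneg (convex_Ici 1) (by fun_prop)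
    (fun x _ => (hasDerivAt_one_add_mul_exp_neg x).hasDerivWithinAt)
    (fun x _ => (hasDerivAt_neg_mul_exp_neg x).hasDerivWithinAt) fun x hx => ?_
  rw [interior_Ici] at hx
  exact mul_nonneg (by linarith [hx.out]) (exp_pos _).le

lemma one_sub_mul_le_one_add_mul_exp_neg {x : ℝ} (hx : 0 ≤ x) :
    1 - 0.2985 * x ≤ (1 + x) * exp (-x) := by
  -- The gap is only `≈ 1.3 · 10⁻⁴`, at `x ≈ 1.793`; the tangents at `1.78` and `1.81` lose less
  -- than that on `[1, 1.795]` and `[1.795, 1 / 0.2985]` respectively.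
  rcases le_total x 1 with hx1 | hx1
  · have hchord := concaveOn_one_add_mul_exp_neg.2 (Set.mem_Iic.2 zero_le_one)
      (Set.mem_Iic.2 le_rfl) (sub_nonneg.2 hx1) hx (sub_add_cancel 1 x)
    have he : exp (-1) * 2.7182818286 > 1 := by
      rw [exp_neg, gt_iff_lt, ← div_eq_inv_mul, one_lt_div (exp_pos 1)]
      exact exp_one_lt_d9
    simp only [smul_eq_mul, mul_zero, zero_add, neg_zero, exp_zero, mul_one] at hchord
    nlinarith
  have hx1 : x ∈ Set.Ici 1 := hx1
  rcases le_total x 1.795 with hx2 | hx2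
  · have htangent := convexOn_one_add_mul_exp_neg.add_mul_sub_le_of_hasDerivAt
      (x := 1.78) (by norm_num) hx1 (hasDerivAt_one_add_mul_exp_neg _)
    nlinarith [mul_le_mul_of_nonneg_right exp_neg_1_78_ge
      (by linarith : (0 : ℝ) ≤ 2.78 - 1.78 * (x - 1.78))]
  rcases le_total (1 - 0.2985 * x) 0 with hneg | hpos
  · exact hneg.trans (by positivity)
  · have htangent := convexOn_one_add_mul_exp_neg.add_mul_sub_le_of_hasDerivAt
      (x := 1.81) (by norm_num) hx1 (hasDerivAt_one_add_mul_exp_neg _)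
    nlinarith [mul_le_mul_of_nonneg_right exp_neg_1_81_ge
      (by linarith : (0 : ℝ) ≤ 2.81 - 1.81 * (x - 1.81))]

lemma one_sub_exp_neg_le {x : ℝ} (hx : 0 ≤ x) :
    1 - exp (-x) ≤ 1.2985 * (1 - (1 + x)⁻¹) := by
  have hx1 : 0 < 1 + x := by linarith
  have hG : 1 - (1 + x)⁻¹ = x / (1 + x) := by field_simp; ring
  rw [hG, mul_div_assoc', le_div_iff₀ hx1]
  linarith [one_sub_mul_le_one_add_mul_exp_neg hx]

end Real

open scoped MatrixOrder

namespace Matrix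

variable {n : Type*} [Fintype n] [DecidableEq n] {A : Matrix n n ℝ}

lemma continuousOn_spectrum (f : ℝ → ℝ) : ContinuousOn f (spectrum ℝ A) :=
  (finite_spectrum A).continuousOn f

lemma dotProduct_cfc_mulVec_self (f : ℝ → ℝ) (v : n → ℝ) :
    (cfc f A *ᵥ v) ⬝ᵥ (cfc f A *ᵥ v) = v ⬝ᵥ (cfc (fun x => f x ^ 2) A *ᵥ v) := by
  have hsymm : (cfc f A)ᵀ = cfc f A := by
    simpa [star_eq_conjTranspose] using
      (cfc_predicate f A : IsSelfAdjoint (cfc f A)).star_eq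
  rw [dotProduct_comm, dotProduct_mulVec, ← mulVec_transpose, hsymm, mulVec_mulVec,
    ← cfc_mul f f A (continuousOn_spectrum f) (continuousOn_spectrum f), dotProduct_comm]
  simp only [sq]

lemma dotProduct_cfc_mulVec_le {f g : ℝ → ℝ} {c : ℝ}
    (hfg : ∀ x ∈ spectrum ℝ A, |f x| ≤ c * |g x|) (v : n → ℝ) :
    (cfc f A *ᵥ v) ⬝ᵥ (cfc f A *ᵥ v) ≤ c ^ 2 * ((cfc g A *ᵥ v) ⬝ᵥ (cfc g A *ᵥ v)) := by
  have hpsd : (cfc (fun x => c ^ 2 * g x ^ 2 - f x ^ 2) A).PosSemidef := by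
    rw [← nonneg_iff_posSemidef]
    refine cfc_nonneg fun x hx => ?_
    have := pow_le_pow_left₀ (abs_nonneg _) (hfg x hx) 2
    rw [mul_pow, sq_abs, sq_abs] at this
    linarith
  have := hpsd.dotProduct_mulVec_nonneg v
  rwa [cfc_sub _ _ A (continuousOn_spectrum _) (continuousOn_spectrum _),
    cfc_const_mul _ _ A (continuousOn_spectrum _), sub_mulVec, smul_mulVec,
    dotProduct_sub, dotProduct_smul, star_trivial, ← dotProduct_cfc_mulVec_self,
    ← dotProduct_cfc_mulVec_self, smul_eq_mul, sub_nonneg] at this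

namespace IsHermitian

lemma exp_cfc (hA : A.IsHermitian) (f : ℝ → ℝ) :
    NormedSpace.exp (cfc f A) = cfc (fun x => Real.exp (f x)) A := by
  set U : Matrix n n ℝ := (hA.eigenvectorUnitary : Matrix n n ℝ)
  have hU : IsUnit U := Unitary.isUnit_coe ..
  have hUinv : star U = U⁻¹ := (inv_eq_left_inv (Unitary.coe_star_mul_self _)).symm
  rw [hA.cfc_eq, hA.cfc_eq, IsHermitian.cfc, IsHermitian.cfc, Unitary.conjStarAlgAut_apply,
    Unitary.conjStarAlgAut_apply, hUinv, exp_conj _ _ hU, exp_diagonal]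
  congr 3
  funext i
  simp [Real.exp_eq_exp_ℝ]

lemma inv_cfc (hA : A.IsHermitian) {f : ℝ → ℝ} (hf : ∀ x ∈ spectrum ℝ A, f x ≠ 0) :
    (cfc f A)⁻¹ = cfc (fun x => (f x)⁻¹) A := by
  rw [nonsing_inv_eq_ringInverse, cfc_inv f A hf (continuousOn_spectrum f) hA.isSelfAdjoint]

lemma one_sub_exp_neg_smul (hA : A.IsHermitian) (t : ℝ) :
    1 - NormedSpace.exp (-(t • A)) = cfc (fun x => 1 - Real.exp (-(t * x))) A := by
  rw [cfc_sub _ _ A (continuousOn_spectrum _) (continuousOn_spectrum _), cfc_const_one ℝ A,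
    ← hA.exp_cfc (fun x => -(t * x)), cfc_neg, cfc_const_mul_id _ _ hA.isSelfAdjoint]

lemma one_sub_inv_one_add_smul (hA : A.IsHermitian) {t : ℝ}
    (ht : ∀ x ∈ spectrum ℝ A, 1 + t * x ≠ 0) :
    1 - (1 + t • A)⁻¹ = cfc (fun x => 1 - (1 + t * x)⁻¹) A := by
  rw [cfc_sub _ _ A (continuousOn_spectrum _) (continuousOn_spectrum _), cfc_const_one ℝ A,
    ← hA.inv_cfc ht, cfc_const_add _ _ _ (continuousOn_spectrum _) hA.isSelfAdjoint,
    cfc_const_mul_id _ _ hA.isSelfAdjoint, map_one]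

end IsHermitian

end Matrix

lemma sqnorm_eq_dotProduct {p : ℕ} (v : Fin p → ℝ) : sqnorm v = v ⬝ᵥ v := by
  simp [sqnorm, dotProduct, sq]

lemma enorm'_cfc_mulVec_le {p : ℕ} {A : Matrix (Fin p) (Fin p) ℝ} {f g : ℝ → ℝ} {c : ℝ}
    (hc : 0 ≤ c) (hfg : ∀ x ∈ spectrum ℝ A, |f x| ≤ c * |g x|) (v : Fin p → ℝ) :
    enorm' (cfc f A *ᵥ v) ≤ c * enorm' (cfc g A *ᵥ v) := by
  rw [enorm', enorm', sqnorm_eq_dotProduct, sqnorm_eq_dotProduct, ← Real.sqrt_sq hc,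
    ← Real.sqrt_mul (sq_nonneg c)]
  exact Real.sqrt_le_sqrt (dotProduct_cfc_mulVec_le hfg v)

/-- comparison of the gradient-flow and ridge-regression stochastic error
terms: `‖(I − exp(−tS))v‖ ≤ 1.2985·‖(I − (I + tS)⁻¹)v‖` for `S` symmetric positive semidefinite
and `t ≥ 0`. -/
theorem gf_ridge_stochastic_comparison
    (p : ℕ) (S : Matrix (Fin p) (Fin p) ℝ) (hS : S.PosSemidef)
    (t : ℝ) (ht : 0 ≤ t) (v : Fin p → ℝ) :
    enorm' ((1 - NormedSpace.exp (-(t • S))) *ᵥ v) ≤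
      1.2985 * enorm' ((1 - (1 + t • S)⁻¹) *ᵥ v) := by
  have htx : ∀ x ∈ spectrum ℝ S, 0 ≤ t * x :=
    fun x hx => mul_nonneg ht (spectrum_nonneg_of_nonneg hS.nonneg hx)
  rw [hS.isHermitian.one_sub_exp_neg_smul,
    hS.isHermitian.one_sub_inv_one_add_smul fun x hx => by linarith [htx x hx]]
  refine enorm'_cfc_mulVec_le (by norm_num) (fun x hx => ?_) v
  have hx := htx x hx
  rw [abs_of_nonneg (sub_nonneg.2 (Real.exp_le_one_iff.2 (by linarith))),
    abs_of_nonneg (sub_nonneg.2 (inv_le_one_of_one_le₀ (by linarith)))]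
  exact Real.one_sub_exp_neg_le hx
end

section
/- Let p ∈ ℕ, λ > 0, Σ̂ a p×p real symmetric positive semidefinite matrix, Σ̂_λ := Σ̂ + λ·I_p, ρ ≥ 0, and β̂, β_λ, γ, ε_λ ∈ ℝ^p. Let g(Σ̂_λ) denote the matrix obtained by applying g(x) := min(ρ·x, 1)^{1/2} to Σ̂_λ via the spectral calculus. Assume (i) ‖Σ̂_λ^{1/2}(β̂ − β_λ)‖² ≤ 2‖Σ̂_λ^{1/2} exp(−ρ·Σ̂_λ/2) β_λ‖² + 2‖g(Σ̂_λ) ε_λ‖², and (ii) ⟨Σ̂_λ exp(−ρ·Σ̂_λ/2) β_λ, γ − β_λ⟩ ≥ 0. Then ‖Σ̂_λ^{1/2}(β̂ − γ)‖² ≤ 4‖Σ̂_λ^{1/2}(exp(−ρ·Σ̂_λ/2) β_λ + γ − β_λ)‖² + 4‖g(Σ̂_λ) ε_λ‖². -/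
open Matrix

/-- Euclidean inner product on `Fin p → ℝ`. -/
noncomputable def ip {p : ℕ} (v w : Fin p → ℝ) : ℝ := ∑ i, v i * w i

/-!
Write `A = Σ̂_λ^{1/2}`, `e = exp(-ρΣ̂_λ/2) β_λ` and `d = γ - β_λ`. Then
`β̂ - γ = (β̂ - β_λ) - d`, so `‖A(β̂ - γ)‖² ≤ 2‖A(β̂ - β_λ)‖² + 2‖Ad‖²`, while expanding
`‖A(e + d)‖² = ‖Ae‖² + 2⟨Σ̂_λ e, d⟩ + ‖Ad‖²` and using the compatibility condition
`⟨Σ̂_λ e, d⟩ ≥ 0` shows `‖Ae‖² + ‖Ad‖² ≤ ‖A(e + d)‖²`; inserting (i) into the first bound gives the claim.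
-/

section SqNorm

variable {p : ℕ}

lemma sqnorm_nonneg (v : Fin p → ℝ) : 0 ≤ sqnorm v :=
  Finset.sum_nonneg fun i _ => sq_nonneg (v i)

lemma sqnorm_sub_le (v w : Fin p → ℝ) :
    sqnorm (v - w) ≤ 2 * sqnorm v + 2 * sqnorm w := by
  simp only [sqnorm, Finset.mul_sum, ← Finset.sum_add_distrib]
  exact Finset.sum_le_sum fun i _ => by
    simp only [Pi.sub_apply]; nlinarith [sq_nonneg (v i + w i)]

lemma sqnorm_add (v w : Fin p → ℝ) :
    sqnorm (v + w) = sqnorm v + 2 * ip v w + sqnorm w := by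
  simp only [sqnorm, ip, Pi.add_apply, Finset.mul_sum, ← Finset.sum_add_distrib]
  exact Finset.sum_congr rfl fun i _ => by ring

lemma ip_mulVec_mulVec_of_transpose_eq {A : Matrix (Fin p) (Fin p) ℝ} (hA : Aᵀ = A)
    (v w : Fin p → ℝ) : ip (A *ᵥ v) (A *ᵥ w) = ip ((A * A) *ᵥ v) w := by
  change (A *ᵥ v) ⬝ᵥ (A *ᵥ w) = ((A * A) *ᵥ v) ⬝ᵥ w
  rw [dotProduct_mulVec, ← mulVec_transpose, hA, mulVec_mulVec]

lemma sqnorm_mulVec_sub_le_of_ip_nonneg {A : Matrix (Fin p) (Fin p) ℝ} (hA : Aᵀ = A)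
    {r e d : Fin p → ℝ} {X : ℝ} (hr : sqnorm (A *ᵥ r) ≤ 2 * sqnorm (A *ᵥ e) + 2 * X)
    (hd : 0 ≤ ip ((A * A) *ᵥ e) d) :
    sqnorm (A *ᵥ (r - d)) ≤ 4 * sqnorm (A *ᵥ (e + d)) + 4 * X := by
  have hsub : sqnorm (A *ᵥ (r - d)) ≤ 2 * sqnorm (A *ᵥ r) + 2 * sqnorm (A *ᵥ d) := by
    rw [mulVec_sub]; exact sqnorm_sub_le _ _
  have hadd : sqnorm (A *ᵥ e) + sqnorm (A *ᵥ d) ≤ sqnorm (A *ᵥ (e + d)) := by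
    rw [mulVec_add, sqnorm_add, ip_mulVec_mulVec_of_transpose_eq hA]; linarith
  linarith [sqnorm_nonneg (A *ᵥ d)]

end SqNorm

namespace Matrix.PosSemidef

variable {n : Type*} [Fintype n] [DecidableEq n] {S : Matrix n n ℝ}

lemma transpose_cfc_sqrt (hS : S.PosSemidef) :
    (hS.isHermitian.cfc Real.sqrt)ᵀ = hS.isHermitian.cfc Real.sqrt := by
  rw [← hS.isHermitian.cfc_eq, ← conjTranspose_eq_transpose_of_trivial]
  exact cfc_predicate Real.sqrt S

lemma cfc_sqrt_mul_self (hS : S.PosSemidef) :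
    hS.isHermitian.cfc Real.sqrt * hS.isHermitian.cfc Real.sqrt = S := by
  have hspec := (posSemidef_iff_isHermitian_and_spectrum_nonneg.mp hS).2
  rw [← hS.isHermitian.cfc_eq, ← cfc_mul Real.sqrt Real.sqrt S]
  conv_rhs => rw [← cfc_id' ℝ S hS.isHermitian.isSelfAdjoint]
  exact cfc_congr fun x hx => Real.mul_self_sqrt (hspec hx)

end Matrix.PosSemidef

theorem cg_loss_general_target_general
    (p : ℕ)
    (Sigl : Matrix (Fin p) (Fin p) ℝ)
    (hSigl : Sigl.PosSemidef)
    (rho : ℝ)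
    (betahat betal gam epsl : Fin p → ℝ)
    (hbound : sqnorm ((hSigl.isHermitian.cfc Real.sqrt) *ᵥ (betahat - betal)) ≤
      2 * sqnorm ((hSigl.isHermitian.cfc Real.sqrt) *ᵥ (NormedSpace.exp (-((rho / 2) • Sigl)) *ᵥ betal))
        + 2 * sqnorm (hSigl.isHermitian.cfc (fun x => Real.sqrt (min (rho * x) 1)) *ᵥ epsl))
    (hcond : 0 ≤ ip (Sigl *ᵥ (NormedSpace.exp (-((rho / 2) • Sigl)) *ᵥ betal))
        (gam - betal)) :
    sqnorm ((hSigl.isHermitian.cfc Real.sqrt) *ᵥ (betahat - gam)) ≤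
      4 * sqnorm ((hSigl.isHermitian.cfc Real.sqrt) *ᵥ (NormedSpace.exp (-((rho / 2) • Sigl)) *ᵥ betal
          + gam - betal))
        + 4 * sqnorm (hSigl.isHermitian.cfc (fun x => Real.sqrt (min (rho * x) 1)) *ᵥ epsl) := by
  have key := sqnorm_mulVec_sub_le_of_ip_nonneg hSigl.transpose_cfc_sqrt hbound
    (d := gam - betal) (by rwa [hSigl.cfc_sqrt_mul_self])
  rwa [sub_sub_sub_cancel_right, ← add_sub_assoc] at key

/-- from the bound on the loss at the intrinsic target `β_λ` and the
compatibility condition on `γ`, the regularised prediction loss at the target `γ` is bounded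
by four times the (shifted) approximation error plus four times the stochastic error. -/
theorem cg_loss_general_target
    (p : ℕ) (lam : ℝ) (hlam : 0 < lam)
    (Sig : Matrix (Fin p) (Fin p) ℝ) (hSig : Sig.PosSemidef)
    (Sigl : Matrix (Fin p) (Fin p) ℝ) (hSigl_def : Sigl = Sig + lam • 1)
    (hSigl : Sigl.PosSemidef)
    (rho : ℝ) (hrho : 0 ≤ rho)
    (betahat betal gam epsl : Fin p → ℝ)
    (hbound : sqnorm ((hSigl.isHermitian.cfc Real.sqrt) *ᵥ (betahat - betal)) ≤
      2 * sqnorm ((hSigl.isHermitian.cfc Real.sqrt) *ᵥ (NormedSpace.exp (-((rho / 2) • Sigl)) *ᵥ betal))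
        + 2 * sqnorm (hSigl.isHermitian.cfc (fun x => Real.sqrt (min (rho * x) 1)) *ᵥ epsl))
    (hcond : 0 ≤ ip (Sigl *ᵥ (NormedSpace.exp (-((rho / 2) • Sigl)) *ᵥ betal))
        (gam - betal)) :
    sqnorm ((hSigl.isHermitian.cfc Real.sqrt) *ᵥ (betahat - gam)) ≤
      4 * sqnorm ((hSigl.isHermitian.cfc Real.sqrt) *ᵥ (NormedSpace.exp (-((rho / 2) • Sigl)) *ᵥ betal
          + gam - betal))
        + 4 * sqnorm (hSigl.isHermitian.cfc (fun x => Real.sqrt (min (rho * x) 1)) *ᵥ epsl) :=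
  cg_loss_general_target_general p Sigl hSigl rho betahat betal gam epsl hbound hcond
end

section
/- Let p ∈ ℕ, Σ̂ a p×p real symmetric positive semidefinite matrix, β_0 ∈ ℝ^p, λ ≥ λ′ > 0 and ρ ≥ 0. Define β_λ := (Σ̂ + λ·I_p)^{-1} Σ̂ β_0 and β_{λ′} := (Σ̂ + λ′·I_p)^{-1} Σ̂ β_0, and write Σ̂_λ := Σ̂ + λ·I_p. Then ⟨Σ̂_λ exp(−ρ·Σ̂_λ/2) β_λ, β_{λ′} − β_λ⟩ ≥ 0; that is, the compatibility condition needed in the conjugate-gradient loss bound is satisfied for the target vector γ = β_{λ′}. -/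
open Matrix

/-!
Every matrix in the statement is a function of `Σ̂` in the continuous functional calculus, so the
inner product equals `β₀ ⬝ᵥ h(Σ̂) β₀` with
`h x = (x + λ) e^{-ρ (x + λ) / 2} · x / (x + λ) · (x / (x + λ′) - x / (x + λ))`.
On the spectrum of `Σ̂`, which lies in `[0, ∞)`, both factors of `h` are nonnegative because the
shrinkage factor `x / (x + λ)` decreases in `λ`; hence `h(Σ̂)` is positive semidefinite.
-/

namespace Matrix

lemma continuousOn_spectrum_s7 {n R Y : Type*} [Fintype n] [DecidableEq n] [Field R]
    [TopologicalSpace R] [T1Space R] [TopologicalSpace Y] (f : R → Y) (A : Matrix n n R) :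
    ContinuousOn f (spectrum R A) :=
  A.finite_spectrum.continuousOn f

variable {n : Type*} [Fintype n] [DecidableEq n] {A : Matrix n n ℝ}

lemma PosSemidef.nonneg_of_mem_spectrum (hA : A.PosSemidef) {x : ℝ} (hx : x ∈ spectrum ℝ A) :
    0 ≤ x :=
  (posSemidef_iff_isHermitian_and_spectrum_nonneg.mp hA).2 hx

open scoped Matrix.Norms.L2Operator in
lemma IsHermitian.exp_cfc_s7 (hA : A.IsHermitian) (f : ℝ → ℝ) :
    NormedSpace.exp (cfc f A) = cfc (fun x => Real.exp (f x)) A := by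
  rw [cfc_comp' Real.exp f A Real.continuous_exp.continuousOn (continuousOn_spectrum_s7 _ _)
    hA.isSelfAdjoint, CFC.real_exp_eq_normedSpace_exp (cfc_predicate f A)]

lemma IsHermitian.add_smul_one_eq_cfc (hA : A.IsHermitian) (c : ℝ) :
    A + c • 1 = cfc (· + c) A := by
  rw [cfc_add_const c (fun x => x) A (continuousOn_spectrum_s7 _ _) hA.isSelfAdjoint,
    cfc_id' ℝ A hA.isSelfAdjoint, Algebra.algebraMap_eq_smul_one]

lemma PosSemidef.inv_add_smul_one_mul_eq_cfc (hA : A.PosSemidef) {c : ℝ} (hc : 0 < c) :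
    (A + c • 1)⁻¹ * A = cfc (fun x => x / (x + c)) A := by
  have hS := hA.isHermitian.isSelfAdjoint
  have hne : ∀ x ∈ spectrum ℝ A, x + c ≠ 0 := fun x hx =>
    (add_pos_of_nonneg_of_pos (hA.nonneg_of_mem_spectrum hx) hc).ne'
  rw [hA.isHermitian.add_smul_one_eq_cfc, nonsing_inv_eq_ringInverse,
    ← cfc_inv _ A hne (continuousOn_spectrum_s7 _ _) hS]
  nth_rw 2 [← cfc_id' ℝ A hS]
  rw [← cfc_mul _ _ A (continuousOn_spectrum_s7 _ _) (continuousOn_spectrum_s7 _ _)]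
  simp only [div_eq_inv_mul]

lemma cfc_mulVec_dotProduct_cfc_mulVec (f g : ℝ → ℝ) (v : n → ℝ) :
    (cfc f A *ᵥ v) ⬝ᵥ (cfc g A *ᵥ v) = v ⬝ᵥ (cfc (fun x => f x * g x) A *ᵥ v) := by
  have hf : (cfc f A)ᵀ = cfc f A := by
    rw [← conjTranspose_eq_transpose_of_trivial]
    exact (cfc_predicate f A : IsSelfAdjoint _)
  rw [cfc_mul f g A (continuousOn_spectrum_s7 _ _) (continuousOn_spectrum_s7 _ _), ← mulVec_mulVec,
    ← vecMul_transpose (cfc f A) v, ← dotProduct_mulVec, hf]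

open scoped MatrixOrder in
lemma dotProduct_cfc_mulVec_nonneg {f : ℝ → ℝ} (hf : ∀ x ∈ spectrum ℝ A, 0 ≤ f x) (v : n → ℝ) :
    0 ≤ v ⬝ᵥ (cfc f A *ᵥ v) := by
  simpa only [star_trivial] using
    (nonneg_iff_posSemidef.mp (cfc_nonneg hf)).dotProduct_mulVec_nonneg v

end Matrix

theorem ip_eq_dotProduct {p : ℕ} (v w : Fin p → ℝ) : ip v w = v ⬝ᵥ w := rfl

theorem cg_condition_for_ridge_target_general
    (p : ℕ) (Sig : Matrix (Fin p) (Fin p) ℝ) (hSig : Sig.PosSemidef)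
    (beta0 : Fin p → ℝ) (lam lam' : ℝ) (hlam' : 0 < lam') (hll : lam' ≤ lam)
    (rho : ℝ)
    (Sigl : Matrix (Fin p) (Fin p) ℝ) (hSigl_def : Sigl = Sig + lam • 1)
    (betal betal' : Fin p → ℝ)
    (hbetal : betal = Sigl⁻¹ *ᵥ (Sig *ᵥ beta0))
    (hbetal' : betal' = (Sig + lam' • 1)⁻¹ *ᵥ (Sig *ᵥ beta0)) :
    0 ≤ ip (Sigl *ᵥ (NormedSpace.exp (-((rho / 2) • Sigl)) *ᵥ betal)) (betal' - betal) := by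
  have hlam : 0 < lam := hlam'.trans_le hll
  have hS := hSig.isHermitian
  have hSl : Sigl = cfc (· + lam) Sig := hSigl_def.trans (hS.add_smul_one_eq_cfc lam)
  have hβl : betal = cfc (fun x => x / (x + lam)) Sig *ᵥ beta0 := by
    rw [hbetal, hSigl_def, mulVec_mulVec, hSig.inv_add_smul_one_mul_eq_cfc hlam]
  have hβl' : betal' = cfc (fun x => x / (x + lam')) Sig *ᵥ beta0 := by
    rw [hbetal', mulVec_mulVec, hSig.inv_add_smul_one_mul_eq_cfc hlam']
  have hleft : Sigl *ᵥ (NormedSpace.exp (-((rho / 2) • Sigl)) *ᵥ betal) =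
      cfc (fun x => (x + lam) * Real.exp (-(rho / 2 * (x + lam))) * (x / (x + lam))) Sig *ᵥ
        beta0 := by
    rw [hβl, hSl, ← cfc_const_mul _ _ _ (continuousOn_spectrum_s7 _ _), ← cfc_neg, hS.exp_cfc_s7,
      mulVec_mulVec, mulVec_mulVec,
      ← cfc_mul _ _ _ (continuousOn_spectrum_s7 _ _) (continuousOn_spectrum_s7 _ _),
      ← cfc_mul _ _ _ (continuousOn_spectrum_s7 _ _) (continuousOn_spectrum_s7 _ _)]
  have hright : betal' - betal = cfc (fun x => x / (x + lam') - x / (x + lam)) Sig *ᵥ beta0 := by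
    rw [hβl, hβl', ← sub_mulVec,
      ← cfc_sub _ _ _ (continuousOn_spectrum_s7 _ _) (continuousOn_spectrum_s7 _ _)]
  rw [hleft, hright, ip_eq_dotProduct, cfc_mulVec_dotProduct_cfc_mulVec]
  refine dotProduct_cfc_mulVec_nonneg (fun x hmem => ?_) beta0
  have hx0 : 0 ≤ x := hSig.nonneg_of_mem_spectrum hmem
  exact mul_nonneg (by positivity)
    (sub_nonneg.2 (div_le_div_of_nonneg_left hx0 (by linarith) (by linarith)))

/-- the compatibility condition needed in the conjugate-gradient loss bound is
satisfied for the target vector `γ = β_{λ′}` whenever `0 < λ′ ≤ λ`. -/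
theorem cg_condition_for_ridge_target
    (p : ℕ) (Sig : Matrix (Fin p) (Fin p) ℝ) (hSig : Sig.PosSemidef)
    (beta0 : Fin p → ℝ) (lam lam' : ℝ) (hlam' : 0 < lam') (hll : lam' ≤ lam)
    (rho : ℝ) (hrho : 0 ≤ rho)
    (Sigl : Matrix (Fin p) (Fin p) ℝ) (hSigl_def : Sigl = Sig + lam • 1)
    (betal betal' : Fin p → ℝ)
    (hbetal : betal = Sigl⁻¹ *ᵥ (Sig *ᵥ beta0))
    (hbetal' : betal' = (Sig + lam' • 1)⁻¹ *ᵥ (Sig *ᵥ beta0)) :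
    0 ≤ ip (Sigl *ᵥ (NormedSpace.exp (-((rho / 2) • Sigl)) *ᵥ betal)) (betal' - betal) :=
  cg_condition_for_ridge_target_general p Sig hSig beta0 lam lam' hlam' hll rho Sigl hSigl_def betal
    betal' hbetal hbetal'
end

section
/- Let p ∈ ℕ with p ≥ 2, s_1 ≥ s_2 ≥ … ≥ s_p ≥ 0 real numbers, i ∈ {2,…,p} with s_i > 0, and λ ≥ 0. Define for μ ≥ 0: C(i,μ) := (Σ_{j=i}^p s_j) / ( Σ_{j=1}^{i−1} (s_i+μ)·s_j/(s_j+μ) + Σ_{j=i}^p (s_j+μ)·s_j/(s_{i−1}+μ) ) (with s_j/(s_j+0) interpreted as 1 when s_j > 0). Then C(i,λ) ≤ C(i,0). -/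
/-- the constant `C(i,λ)` of the main comparison theorem is monotone in the
penalty: `C(i,λ) ≤ C(i,0)` for `λ ≥ 0`. -/
theorem C_lam_le_C_zero
    (p : ℕ) (hp : 2 ≤ p)
    (s : ℕ → ℝ)
    (hmono : ∀ j k, 1 ≤ j → j ≤ k → k ≤ p → s k ≤ s j)
    (hnonneg : ∀ j, 1 ≤ j → j ≤ p → 0 ≤ s j)
    (i : ℕ) (hi2 : 2 ≤ i) (hip : i ≤ p) (hsi : 0 < s i)
    (lam : ℝ) (hlam : 0 ≤ lam)
    (C : ℝ → ℝ)
    (hC : ∀ mu : ℝ, 0 ≤ mu → C mu = (∑ j ∈ Finset.Icc i p, s j) /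
        ((∑ j ∈ Finset.Icc 1 (i - 1), (s i + mu) * s j / (s j + mu)) +
          ∑ j ∈ Finset.Icc i p, (s j + mu) * s j / (s (i - 1) + mu))) :
    C lam ≤ C 0 := by
  rw [hC lam hlam, hC 0 le_rfl]
  have hi1 : 1 ≤ i - 1 := by omega
  have hi1p : i - 1 ≤ p := by omega
  have hsi1 : 0 < s (i - 1) := lt_of_lt_of_le hsi (hmono (i - 1) i hi1 (by omega) hip)
  -- first sum inequality
  have h1 : (∑ j ∈ Finset.Icc 1 (i - 1), (s i + 0) * s j / (s j + 0)) ≤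
      ∑ j ∈ Finset.Icc 1 (i - 1), (s i + lam) * s j / (s j + lam) := by
    apply Finset.sum_le_sum
    intro j hj
    simp only [Finset.mem_Icc] at hj
    have hsj : 0 < s j := lt_of_lt_of_le hsi (hmono j i hj.1 (by omega) hip)
    rw [div_le_div_iff₀ (by linarith) (by linarith)]
    have h : s i ≤ s j := hmono j i hj.1 (by omega) hip
    nlinarith [mul_nonneg (mul_nonneg hlam hsj.le) (sub_nonneg.2 h)]
  have h2 : (∑ j ∈ Finset.Icc i p, (s j + 0) * s j / (s (i - 1) + 0)) ≤
      ∑ j ∈ Finset.Icc i p, (s j + lam) * s j / (s (i - 1) + lam) := by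
    apply Finset.sum_le_sum
    intro j hj
    simp only [Finset.mem_Icc] at hj
    have hsj : 0 ≤ s j := hnonneg j (by omega) hj.2
    have hle : s j ≤ s (i - 1) := hmono (i - 1) j hi1 (by omega) hj.2
    rw [div_le_div_iff₀ (by linarith) (by linarith)]
    nlinarith [mul_nonneg (mul_nonneg hlam hsj) (sub_nonneg.2 hle)]
  have hD0pos : 0 < (∑ j ∈ Finset.Icc 1 (i - 1), (s i + 0) * s j / (s j + 0)) +
      ∑ j ∈ Finset.Icc i p, (s j + 0) * s j / (s (i - 1) + 0) := by
    have hpos : 0 < ∑ j ∈ Finset.Icc 1 (i - 1), (s i + 0) * s j / (s j + 0) := by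
      apply Finset.sum_pos
      · intro j hj
        simp only [Finset.mem_Icc] at hj
        have hsj : 0 < s j := lt_of_lt_of_le hsi (hmono j i hj.1 (by omega) hip)
        positivity
      · exact ⟨1, by simp [Finset.mem_Icc]; omega⟩
    have hnn : 0 ≤ ∑ j ∈ Finset.Icc i p, (s j + 0) * s j / (s (i - 1) + 0) := by
      apply Finset.sum_nonneg
      intro j hj
      simp only [Finset.mem_Icc] at hj
      have hsj : 0 ≤ s j := hnonneg j (by omega) hj.2
      positivity
    linarith
  have hN : 0 ≤ ∑ j ∈ Finset.Icc i p, s j := by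
    apply Finset.sum_nonneg
    intro j hj
    simp only [Finset.mem_Icc] at hj
    exact hnonneg j (by omega) hj.2
  exact div_le_div_of_nonneg_left hN hD0pos (by linarith)
end

section
/- Let p ∈ ℕ with p ≥ 2, s_1 ≥ s_2 ≥ … ≥ s_p > 0 real numbers, C > 0 and α > 1. Assume that s_j/s_i ≤ C·(j/i)^{−α} for all 2 ≤ i ≤ j ≤ p. Then for every i ∈ {2,…,p}: (Σ_{j=i}^p s_j/s_i) / ( (i−1) + (s_i/s_{i−1})·Σ_{j=i}^p (s_j/s_i)² ) ≤ C(α+1)/(α−1). In particular, the constant C_{t,0} from the main comparison theorem is uniformly bounded by C(α+1)/(α−1) over all t. -/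
open Real Set

lemma key_mvt (α : ℝ) (hα : 1 < α) (a : ℝ) (ha : 1 ≤ a) :
    (a + 1) ^ (-α) * (α - 1) ≤ a ^ (1 - α) - (a + 1) ^ (1 - α) := by
  have ha0 : (0:ℝ) < a := by linarith
  have hcont : ContinuousOn (fun x : ℝ => x ^ (1 - α)) (Icc a (a + 1)) := by
    apply ContinuousOn.rpow_const continuousOn_id
    intro x hx
    have hx0 : (0:ℝ) < x := lt_of_lt_of_le ha0 hx.1
    exact Or.inl (by simpa using hx0.ne')
  have hderiv : ∀ x ∈ Ioo a (a + 1),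
      HasDerivAt (fun x : ℝ => x ^ (1 - α)) ((1 - α) * x ^ (-α)) x := by
    intro x hx
    have hx0 : (0:ℝ) < x := lt_of_lt_of_le ha0 hx.1.le
    have := Real.hasDerivAt_rpow_const (p := 1 - α) (x := x) (Or.inl hx0.ne')
    convert this using 2
    rw [show (1 - α - 1) = -α by ring]
  obtain ⟨c, hc, hceq⟩ := exists_hasDerivAt_eq_slope (fun x : ℝ => x ^ (1 - α))
    (fun x => (1 - α) * x ^ (-α)) (by linarith) hcont hderiv
  have hmono : (a + 1) ^ (-α) ≤ c ^ (-α) :=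
    Real.rpow_le_rpow_of_nonpos (by linarith [hc.1]) (by linarith [hc.2]) (by linarith)
  have heq : (1 - α) * c ^ (-α) = (a + 1) ^ (1 - α) - a ^ (1 - α) := by
    rw [hceq]; ring_nf
  nlinarith [heq, hmono]


lemma sum_bound (α : ℝ) (hα : 1 < α)
    (key_mvt : ∀ a : ℝ, 1 ≤ a → (a + 1) ^ (-α) * (α - 1) ≤ a ^ (1 - α) - (a + 1) ^ (1 - α))
    (i p : ℕ) (hi : 1 ≤ i) :
    ∑ j ∈ Finset.Icc i p, ((j : ℝ) / (i : ℝ)) ^ (-α) ≤ 1 + (i : ℝ) / (α - 1) := by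
  have hα1 : (0:ℝ) < α - 1 := by linarith
  have hiR : (1:ℝ) ≤ (i:ℝ) := by exact_mod_cast hi
  have hi0 : (0:ℝ) < (i:ℝ) := by linarith
  rcases lt_or_ge p i with h | h
  · rw [Finset.Icc_eq_empty (by omega)]
    simp only [Finset.sum_empty]
    positivity
  · rw [Finset.Icc_eq_cons_Ioc h, Finset.sum_cons]
    have h1 : ((i:ℝ)/(i:ℝ)) ^ (-α) = 1 := by
      rw [div_self hi0.ne', Real.one_rpow]
    rw [h1]
    gcongr
    have hIoc : Finset.Ioc i p = Finset.Ico (i+1) (p+1) := by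
      ext x; simp [Nat.lt_succ_iff]
    rw [hIoc, Finset.sum_Ico_eq_sum_range]
    have hterm : ∀ k ∈ Finset.range (p + 1 - (i + 1)),
        (((i + 1 + k : ℕ) : ℝ) / (i : ℝ)) ^ (-α) ≤
        (i:ℝ)^α / (α-1) * ((((i:ℝ)+(k:ℕ))^(1-α)) - (((i:ℝ)+((k+1:ℕ):ℝ))^(1-α))) := by
      intro k _
      have ha : (1:ℝ) ≤ (i:ℝ) + k := by
        have : (0:ℝ) ≤ (k:ℝ) := Nat.cast_nonneg k
        linarith
      have hk := key_mvt ((i:ℝ) + k) ha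
      have hcast : ((i + 1 + k : ℕ) : ℝ) = (i:ℝ) + k + 1 := by push_cast; ring
      have hdiv : (((i + 1 + k : ℕ) : ℝ) / (i : ℝ)) ^ (-α)
          = (i:ℝ)^α * ((i:ℝ) + k + 1) ^ (-α) := by
        rw [hcast, Real.div_rpow (by linarith) hi0.le, Real.rpow_neg hi0.le,
          div_eq_mul_inv, inv_inv, mul_comm]
      rw [hdiv]
      have hi' : (0:ℝ) < (i:ℝ)^α := Real.rpow_pos_of_pos hi0 α
      have h2 : ((i:ℝ) + k + 1) ^ (-α) ≤
          (((i:ℝ)+k)^(1-α) - ((i:ℝ)+k+1)^(1-α)) / (α - 1) := by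
        rw [le_div_iff₀ hα1]; linarith
      calc (i:ℝ)^α * ((i:ℝ) + k + 1) ^ (-α)
          ≤ (i:ℝ)^α * ((((i:ℝ)+k)^(1-α) - ((i:ℝ)+k+1)^(1-α)) / (α - 1)) :=
            mul_le_mul_of_nonneg_left h2 hi'.le
        _ = (i:ℝ)^α / (α-1) * ((((i:ℝ)+(k:ℕ))^(1-α)) - (((i:ℝ)+((k+1:ℕ):ℝ))^(1-α))) := by
            push_cast; ring
    calc ∑ k ∈ Finset.range (p + 1 - (i + 1)), (((i + 1 + k : ℕ) : ℝ) / (i : ℝ)) ^ (-α)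
        ≤ ∑ k ∈ Finset.range (p + 1 - (i + 1)),
            (i:ℝ)^α / (α-1) * ((((i:ℝ)+(k:ℕ))^(1-α)) - (((i:ℝ)+((k+1:ℕ):ℝ))^(1-α))) :=
          Finset.sum_le_sum hterm
      _ = (i:ℝ)^α / (α-1) * ((((i:ℝ)+((0:ℕ):ℝ))^(1-α)) -
            (((i:ℝ)+(((p + 1 - (i + 1)):ℕ):ℝ))^(1-α))) := by
          rw [← Finset.mul_sum]
          congr 1
          exact Finset.sum_range_sub' (fun k : ℕ => ((i:ℝ)+(k:ℕ))^(1-α)) _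
      _ ≤ (i:ℝ) / (α - 1) := by
          have hnn : (0:ℝ) ≤ ((i:ℝ)+(((p + 1 - (i + 1)):ℕ):ℝ))^(1-α) :=
            Real.rpow_nonneg (by positivity) _
          have hmul : (i:ℝ)^α * (i:ℝ)^(1-α) = (i:ℝ) := by
            rw [← Real.rpow_add hi0]; norm_num
          have hi' : (0:ℝ) < (i:ℝ)^α := Real.rpow_pos_of_pos hi0 α
          have h0 : (((0:ℕ)):ℝ) = 0 := by norm_num
          rw [h0, add_zero, div_mul_eq_mul_div, div_le_div_iff₀ hα1 hα1]
          nlinarith [mul_nonneg (mul_nonneg hi'.le hnn) hα1.le]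



/-- under the polynomial eigenvalue-decay condition
`s j / s i ≤ C (j/i)^{−α}` (α > 1), the constant of the main comparison theorem is uniformly
bounded by `C(α+1)/(α−1)`. -/
theorem C_bounded_polynomial_decay
    (p : ℕ) (hp : 2 ≤ p)
    (s : ℕ → ℝ)
    (hmono : ∀ j k, 1 ≤ j → j ≤ k → k ≤ p → s k ≤ s j)
    (hpos : ∀ j, 1 ≤ j → j ≤ p → 0 < s j)
    (C : ℝ) (hC : 0 < C) (α : ℝ) (hα : 1 < α)
    (hdecay : ∀ i j, 2 ≤ i → i ≤ j → j ≤ p → s j / s i ≤ C * ((j : ℝ) / (i : ℝ)) ^ (-α)) :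
    ∀ i, 2 ≤ i → i ≤ p →
      (∑ j ∈ Finset.Icc i p, s j / s i) /
          (((i : ℝ) - 1) + (s i / s (i - 1)) * ∑ j ∈ Finset.Icc i p, (s j / s i) ^ 2) ≤
        C * (α + 1) / (α - 1) := by
  intro i hi2 hip
  have hα1 : (0:ℝ) < α - 1 := by linarith
  have h2i : (2:ℝ) ≤ (i:ℝ) := by exact_mod_cast hi2
  set N := ∑ j ∈ Finset.Icc i p, s j / s i with hN
  set D := ((i : ℝ) - 1) + (s i / s (i - 1)) * ∑ j ∈ Finset.Icc i p, (s j / s i) ^ 2 with hD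
  have hNnn : 0 ≤ N := by
    apply Finset.sum_nonneg
    intro j hj
    rw [Finset.mem_Icc] at hj
    exact div_nonneg (hpos j (by omega) hj.2).le (hpos i (by omega) hip).le
  have hDge : (i:ℝ) - 1 ≤ D := by
    have h1 : 0 ≤ s i / s (i - 1) :=
      div_nonneg (hpos i (by omega) hip).le (hpos (i-1) (by omega) (by omega)).le
    have h2 : 0 ≤ ∑ j ∈ Finset.Icc i p, (s j / s i) ^ 2 :=
      Finset.sum_nonneg fun j _ => sq_nonneg _
    simp only [hD]
    nlinarith [mul_nonneg h1 h2]
  have hi1 : (0:ℝ) < (i:ℝ) - 1 := by linarith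
  have hDpos : 0 < D := lt_of_lt_of_le hi1 hDge
  have hNle : N ≤ C * (1 + (i:ℝ)/(α-1)) := by
    calc N ≤ ∑ j ∈ Finset.Icc i p, C * ((j : ℝ) / (i : ℝ)) ^ (-α) := by
          apply Finset.sum_le_sum
          intro j hj
          rw [Finset.mem_Icc] at hj
          exact hdecay i j hi2 hj.1 hj.2
      _ = C * ∑ j ∈ Finset.Icc i p, ((j : ℝ) / (i : ℝ)) ^ (-α) := by
          rw [Finset.mul_sum]
      _ ≤ C * (1 + (i:ℝ)/(α-1)) :=
          mul_le_mul_of_nonneg_left (sum_bound α hα (key_mvt α hα) i p (by omega)) hC.le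
  have hfin : C * (1 + (i:ℝ)/(α-1)) ≤ C * (α + 1) / (α - 1) * ((i:ℝ) - 1) := by
    rw [div_mul_eq_mul_div, mul_add, le_div_iff₀ hα1]
    have hd : (i:ℝ)/(α-1) * (α-1) = (i:ℝ) := div_mul_cancel₀ _ hα1.ne'
    nlinarith [mul_nonneg (mul_nonneg hC.le (by linarith : (0:ℝ) ≤ α)) (by linarith : (0:ℝ) ≤ (i:ℝ) - 2)]
  calc N / D ≤ N / ((i:ℝ) - 1) := by
        rw [div_le_div_iff₀ hDpos hi1]
        exact mul_le_mul_of_nonneg_left hDge hNnn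
    _ ≤ (C * (α + 1) / (α - 1) * ((i:ℝ) - 1)) / ((i:ℝ) - 1) := by
        gcongr
        exact hNle.trans hfin
    _ = C * (α + 1) / (α - 1) := by
        field_simp
end

section
/- Let p ∈ ℕ, λ > 0, v ≥ 0 (playing the role of σ²/n), s_1 ≥ s_2 ≥ … ≥ s_p ≥ 0 and a_1, …, a_p ∈ ℝ. Assume that for every i ∈ {1,…,p}: λ·Σ_{j=i}^p s_j a_j² ≥ v·Σ_{j=i}^p s_j. Define for t ≥ 0 the gradient-flow prediction risk r(t) := Σ_{i=1}^p [ a_i²·(s_i·e^{−t(s_i+λ)} + λ)²/(s_i+λ) + v·(1 − e^{−t(s_i+λ)})²·s_i/(s_i+λ) ]. Then r is monotonically nonincreasing on [0,∞). -/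
/-!
With `eᵢ = exp (-t (sᵢ + λ))`, the derivative of the risk is
`r'(t) = -2 ∑ eᵢ (λ sᵢ aᵢ² - v sᵢ) - 2 ∑ eᵢ² sᵢ (sᵢ aᵢ² + v)`.
The second sum is termwise nonnegative. For `t ≥ 0` the weights `eᵢ` are positive and
nondecreasing in `i` because `s` is nonincreasing, while the hypothesis on `λ` says exactly that
every tail sum of `λ sᵢ aᵢ² - v sᵢ` is nonnegative; Abel summation then makes the first sum
nonnegative as well, so `r' ≤ 0` on `[0, ∞)`.
-/

open Finset

theorem mul_sum_Icc_le_sum_Icc_mul {R : Type*} [Semiring R] [PartialOrder R] [IsOrderedRing R]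
    {f g : ℕ → R} {m n : ℕ} (hf : MonotoneOn f (Set.Icc m n))
    (hg : ∀ k ∈ Ioc m n, 0 ≤ ∑ j ∈ Icc k n, g j) :
    f m * ∑ j ∈ Icc m n, g j ≤ ∑ j ∈ Icc m n, f j * g j := by
  rcases lt_or_ge n (m + 1) with hn | hn
  · rcases lt_or_eq_of_le (Nat.lt_succ_iff.mp hn) with hnm | rfl
    · simp [Icc_eq_empty_of_lt hnm]
    · simp
  have hrec : f (m + 1) * ∑ j ∈ Icc (m + 1) n, g j ≤ ∑ j ∈ Icc (m + 1) n, f j * g j :=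
    mul_sum_Icc_le_sum_Icc_mul (hf.mono (Set.Icc_subset_Icc (by omega) le_rfl))
      fun k hk => hg k (Ioc_subset_Ioc_left (by omega) hk)
  have hstep : f m * ∑ j ∈ Icc (m + 1) n, g j ≤ f (m + 1) * ∑ j ∈ Icc (m + 1) n, g j :=
    mul_le_mul_of_nonneg_right (hf ⟨le_rfl, by omega⟩ ⟨by omega, hn⟩ (by omega))
      (hg (m + 1) (mem_Ioc.2 ⟨by omega, hn⟩))
  rw [← add_sum_Ioc_eq_sum_Icc (by omega), ← add_sum_Ioc_eq_sum_Icc (by omega),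
    ← Icc_add_one_left_eq_Ioc, mul_add]
  exact add_le_add le_rfl (hstep.trans hrec)
termination_by n + 1 - m

theorem sum_Icc_mul_nonneg_of_monotoneOn {R : Type*} [Semiring R] [PartialOrder R]
    [IsOrderedRing R] {f g : ℕ → R} {m n : ℕ} (hf₀ : 0 ≤ f m)
    (hf : MonotoneOn f (Set.Icc m n))
    (hg : ∀ k ∈ Icc m n, 0 ≤ ∑ j ∈ Icc k n, g j) :
    0 ≤ ∑ j ∈ Icc m n, f j * g j := by
  rcases lt_or_ge n m with hnm | hmn
  · simp [Icc_eq_empty_of_lt hnm]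
  exact (mul_nonneg hf₀ (hg m (by simp [hmn]))).trans
    (mul_sum_Icc_le_sum_Icc_mul hf fun k hk => hg k (Ioc_subset_Icc_self hk))

open Real

noncomputable def gfRiskTerm (lam v s a t : ℝ) : ℝ :=
  a ^ 2 * (s * exp (-(t * (s + lam))) + lam) ^ 2 / (s + lam)
    + v * (1 - exp (-(t * (s + lam)))) ^ 2 * s / (s + lam)

noncomputable def gfRiskTermDeriv (lam v s a t : ℝ) : ℝ :=
  -2 * (exp (-(t * (s + lam))) * (lam * (s * a ^ 2) - v * s)
    + exp (-(t * (s + lam))) ^ 2 * (s * (s * a ^ 2 + v)))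

theorem hasDerivAt_gfRiskTerm {lam v s : ℝ} (a t : ℝ) (h : s + lam ≠ 0) :
    HasDerivAt (gfRiskTerm lam v s a) (gfRiskTermDeriv lam v s a t) t := by
  have hexp : HasDerivAt (fun t => exp (-(t * (s + lam))))
      (exp (-(t * (s + lam))) * -(s + lam)) t :=
    (((hasDerivAt_id t).mul_const (s + lam)).neg.congr_deriv (by simp)).exp
  have hsum := ((((hexp.const_mul s).add_const lam).fun_pow 2).const_mul (a ^ 2)).div_const
    (s + lam) |>.fun_add (((((hexp.const_sub 1).fun_pow 2).const_mul v).mul_const s).div_const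
    (s + lam))
  refine hsum.congr_deriv ?_
  unfold gfRiskTermDeriv
  field_simp
  ring

theorem sum_gfRiskTermDeriv_nonpos {p : ℕ} {lam v t : ℝ} {s a : ℕ → ℝ} (ht : 0 ≤ t)
    (hv : 0 ≤ v) (hs : AntitoneOn s (Set.Icc 1 p)) (hs₀ : ∀ i ∈ Icc 1 p, 0 ≤ s i)
    (hcond : ∀ k ∈ Icc 1 p,
      v * ∑ j ∈ Icc k p, s j ≤ lam * ∑ j ∈ Icc k p, s j * a j ^ 2) :
    ∑ i ∈ Icc 1 p, gfRiskTermDeriv lam v (s i) (a i) t ≤ 0 := by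
  have hexp : MonotoneOn (fun i => exp (-(t * (s i + lam)))) (Set.Icc 1 p) :=
    fun i hi j hj hij => exp_le_exp.2 (by nlinarith [hs hi hj hij])
  have htail : ∀ k ∈ Icc 1 p, 0 ≤ ∑ j ∈ Icc k p, (lam * (s j * a j ^ 2) - v * s j) := by
    intro k hk
    rw [sum_sub_distrib, ← mul_sum, ← mul_sum]
    linarith [hcond k hk]
  have hlinear :
      0 ≤ ∑ i ∈ Icc 1 p, exp (-(t * (s i + lam))) * (lam * (s i * a i ^ 2) - v * s i) :=
    sum_Icc_mul_nonneg_of_monotoneOn (exp_pos _).le hexp htail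
  have hquadratic :
      0 ≤ ∑ i ∈ Icc 1 p, exp (-(t * (s i + lam))) ^ 2 * (s i * (s i * a i ^ 2 + v)) :=
    sum_nonneg fun i hi => by have := hs₀ i hi; positivity
  simp only [gfRiskTermDeriv, ← mul_sum, sum_add_distrib]
  linarith

/-- for a sufficiently large penalty `λ` (condition on partial sums), the
gradient-flow prediction risk `r` (written in eigencoordinates) is monotonically nonincreasing
on `[0,∞)`. -/
theorem gf_risk_monotone
    (p : ℕ) (lam : ℝ) (hlam : 0 < lam) (v : ℝ) (hv : 0 ≤ v)
    (s : ℕ → ℝ)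
    (hmono : ∀ i j, 1 ≤ i → i ≤ j → j ≤ p → s j ≤ s i)
    (hnonneg : ∀ j, 1 ≤ j → j ≤ p → 0 ≤ s j)
    (a : ℕ → ℝ)
    (hcond : ∀ i, 1 ≤ i → i ≤ p →
      v * ∑ j ∈ Finset.Icc i p, s j ≤ lam * ∑ j ∈ Finset.Icc i p, s j * a j ^ 2)
    (r : ℝ → ℝ)
    (hr : ∀ t : ℝ, r t = ∑ i ∈ Finset.Icc 1 p,
      (a i ^ 2 * (s i * Real.exp (-(t * (s i + lam))) + lam) ^ 2 / (s i + lam)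
        + v * (1 - Real.exp (-(t * (s i + lam)))) ^ 2 * s i / (s i + lam))) :
    ∀ t₁ t₂ : ℝ, 0 ≤ t₁ → t₁ ≤ t₂ → r t₂ ≤ r t₁ := by
  have hderiv : ∀ t, HasDerivAt r (∑ i ∈ Icc 1 p, gfRiskTermDeriv lam v (s i) (a i) t) t := by
    intro t
    rw [show r = fun t => ∑ i ∈ Icc 1 p, gfRiskTerm lam v (s i) (a i) t from funext hr]
    refine HasDerivAt.fun_sum fun i hi => hasDerivAt_gfRiskTerm _ _ ?_
    have := hnonneg i (mem_Icc.1 hi).1 (mem_Icc.1 hi).2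
    positivity
  have hanti : AntitoneOn r (Set.Ici 0) :=
    antitoneOn_of_hasDerivWithinAt_nonpos (convex_Ici 0)
      (fun t _ => (hderiv t).continuousAt.continuousWithinAt)
      (fun t _ => (hderiv t).hasDerivWithinAt)
      fun t ht => sum_gfRiskTermDeriv_nonpos (interior_Ici.subset ht).le hv
        (fun i hi j hj hij => hmono i j hi.1 hij hj.2)
        (fun i hi => hnonneg i (mem_Icc.1 hi).1 (mem_Icc.1 hi).2)
        (fun k hk => hcond k (mem_Icc.1 hk).1 (mem_Icc.1 hk).2)
  intro t₁ t₂ ht₁ ht₁₂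
  exact hanti ht₁ (ht₁.trans ht₁₂) ht₁₂
end

section
/- Let p ∈ ℕ, λ > 0, v ≥ 0, t ≥ 0, s_1 ≥ s_2 ≥ … ≥ s_p ≥ 0 and a_1, …, a_p ∈ ℝ. Assume that for every i ∈ {1,…,p}: λ·Σ_{j=i}^p s_j a_j² ≥ v·Σ_{j=i}^p s_j. Then Σ_{i=1}^p e^{−t·s_i}·s_i·(λ·a_i² − v) ≥ 0. -/
/-- the key trace non-negativity step in the proof of the monotonicity of the
gradient-flow prediction risk: `Σ_i e^{−t s_i} s_i (λ a_i² − v) ≥ 0` under the partial-sum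
condition. -/
theorem trace_nonneg_step
    (p : ℕ) (lam : ℝ) (hlam : 0 < lam) (v : ℝ) (hv : 0 ≤ v) (t : ℝ) (ht : 0 ≤ t)
    (s : ℕ → ℝ)
    (hmono : ∀ i j, 1 ≤ i → i ≤ j → j ≤ p → s j ≤ s i)
    (hnonneg : ∀ j, 1 ≤ j → j ≤ p → 0 ≤ s j)
    (a : ℕ → ℝ)
    (hcond : ∀ i, 1 ≤ i → i ≤ p →
      v * ∑ j ∈ Finset.Icc i p, s j ≤ lam * ∑ j ∈ Finset.Icc i p, s j * a j ^ 2) :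
    0 ≤ ∑ i ∈ Finset.Icc 1 p, Real.exp (-(t * s i)) * s i * (lam * a i ^ 2 - v) := by
  classical
  set b : ℕ → ℝ := fun j => s j * (lam * a j ^ 2 - v) with hb
  have hT : ∀ i, 1 ≤ i → i ≤ p → 0 ≤ ∑ j ∈ Finset.Icc i p, b j := by
    intro i h1 h2
    have h := hcond i h1 h2
    have hexp : ∑ j ∈ Finset.Icc i p, b j
        = lam * (∑ j ∈ Finset.Icc i p, s j * a j ^ 2) - v * (∑ j ∈ Finset.Icc i p, s j) := by
      rw [Finset.mul_sum, Finset.mul_sum, ← Finset.sum_sub_distrib]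
      exact Finset.sum_congr rfl (fun j _ => by simp [hb]; ring)
    rw [hexp]; linarith
  have key : ∀ n : ℕ, ∀ i, 1 ≤ i → i ≤ p → p - i ≤ n →
      Real.exp (-(t * s i)) * (∑ j ∈ Finset.Icc i p, b j)
        ≤ ∑ j ∈ Finset.Icc i p, Real.exp (-(t * s j)) * b j := by
    intro n
    induction n with
    | zero =>
      intro i h1 h2 h3
      have : i = p := by omega
      subst this
      simp [Finset.Icc_self]
    | succ n ih =>
      intro i h1 h2 h3
      by_cases hip : i = p
      · subst hip; simp [Finset.Icc_self]
      · have hlt : i < p := lt_of_le_of_ne h2 hip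
        have hsplit : Finset.Icc i p = insert i (Finset.Icc (i+1) p) := by
          ext x; simp only [Finset.mem_Icc, Finset.mem_insert]; omega
        have hnotmem : i ∉ Finset.Icc (i+1) p := by simp
        have ihx := ih (i+1) (by omega) (by omega) (by omega)
        have hTs := hT (i+1) (by omega) (by omega)
        have hes : Real.exp (-(t * s i)) ≤ Real.exp (-(t * s (i+1))) := by
          apply Real.exp_le_exp.2
          have := hmono i (i+1) h1 (by omega) (by omega)
          nlinarith
        rw [hsplit, Finset.sum_insert hnotmem, Finset.sum_insert hnotmem]
        have h1' : Real.exp (-(t * s i)) * (∑ j ∈ Finset.Icc (i+1) p, b j)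
            ≤ Real.exp (-(t * s (i+1))) * (∑ j ∈ Finset.Icc (i+1) p, b j) :=
          mul_le_mul_of_nonneg_right hes hTs
        calc Real.exp (-(t * s i)) * (b i + ∑ j ∈ Finset.Icc (i+1) p, b j)
            = Real.exp (-(t * s i)) * b i
              + Real.exp (-(t * s i)) * (∑ j ∈ Finset.Icc (i+1) p, b j) := by ring
          _ ≤ Real.exp (-(t * s i)) * b i
              + Real.exp (-(t * s (i+1))) * (∑ j ∈ Finset.Icc (i+1) p, b j) := by linarith
          _ ≤ Real.exp (-(t * s i)) * b i + ∑ j ∈ Finset.Icc (i+1) p, Real.exp (-(t * s j)) * b j := by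
              linarith
  rcases Nat.eq_zero_or_pos p with hp | hp
  · subst hp; simp
  · have hk := key p 1 le_rfl hp (by omega)
    have hT1 := hT 1 le_rfl hp
    have hpos : 0 ≤ Real.exp (-(t * s 1)) * (∑ j ∈ Finset.Icc 1 p, b j) :=
      mul_nonneg (Real.exp_pos _).le hT1
    have heq : ∑ i ∈ Finset.Icc 1 p, Real.exp (-(t * s i)) * s i * (lam * a i ^ 2 - v)
        = ∑ j ∈ Finset.Icc 1 p, Real.exp (-(t * s j)) * b j :=
      Finset.sum_congr rfl (fun j _ => by simp [hb, mul_assoc])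
    rw [heq]; linarith
end
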